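/- arXiv:2409.14790 — 2 statements merged into one kernel-verified Lean document; each statement's English description precedes it below -/
import Mathlib

section
/- Let x ∈ ℂ^n with Nx ≠ 0. Then qf_x(μ) → rq_{M,N}(x) as |μ| → ∞ in ℂ; that is, the limit of the quotient function at infinity is the Rayleigh quotient. -/
open Matrix Filter Topology
open scoped ComplexOrder

noncomputable def innerP {n : ℕ} (P : Matrix (Fin n) (Fin n) ℂ) (x y : Fin n → ℂ) : ℂ :=
  star y ⬝ᵥ P.mulVec x

noncomputable def normP {n : ℕ} (P : Matrix (Fin n) (Fin n) ℂ) (x : Fin n → ℂ) : ℝ :=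
  Real.sqrt (innerP P x x).re

noncomputable def rq {n : ℕ} (M N P : Matrix (Fin n) (Fin n) ℂ) (x : Fin n → ℂ) : ℂ :=
  innerP P (M.mulVec x) (N.mulVec x) / innerP P (N.mulVec x) (N.mulVec x)

noncomputable def r0 {n : ℕ} (M N P : Matrix (Fin n) (Fin n) ℂ) (x : Fin n → ℂ) : ℝ :=
  normP P (M.mulVec x - rq M N P x • N.mulVec x) / normP P (N.mulVec x)

noncomputable def qf {n : ℕ} (M N P : Matrix (Fin n) (Fin n) ℂ) (x : Fin n → ℂ) (μ : ℂ) : ℂ :=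
  (innerP P ((M - μ • N).mulVec x) (N.mulVec x) /
      ((‖innerP P ((M - μ • N).mulVec x) (N.mulVec x)‖ : ℝ) : ℂ)) *
    ((normP P ((M - μ • N).mulVec x) / normP P (N.mulVec x) : ℝ) : ℂ) + μ

def genSpec {n : ℕ} (M N : Matrix (Fin n) (Fin n) ℂ) : Set ℂ :=
  {l : ℂ | (M - l • N).det = 0}

/-
Write `a = M x`, `b = N x` and `ρ = rq M N P x`, so that `a - ρ b ⊥ b`. Then
`⟨a - μ b, b⟩ = (ρ - μ) ‖b‖²` has the phase of `ρ - μ`, and Pythagoras gives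
`‖a - μ b‖ / ‖b‖ = √(r² + |ρ - μ|²)` with `r = ‖a - ρ b‖ / ‖b‖`. Hence
`|qf x μ - ρ| = √(r² + |ρ - μ|²) - |ρ - μ| ≤ r² / |ρ - μ|`, which tends to `0`.
-/

open scoped InnerProductSpace
open Bornology

lemma abs_sub_le_sq_div_of_sq_eq_sq_add_sq {r s t : ℝ} (hs : 0 ≤ s) (ht : 0 < t)
    (h : s ^ 2 = r ^ 2 + t ^ 2) : |s - t| ≤ r ^ 2 / t := by
  have hts : t ≤ s := by nlinarith [sq_nonneg r]
  rw [abs_of_nonneg (sub_nonneg.mpr hts), le_div_iff₀ ht]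
  nlinarith

lemma Complex.norm_div_norm_mul_sub_self {w : ℂ} (hw : w ≠ 0) (s : ℝ) :
    ‖w / ‖w‖ * s - w‖ = |s - ‖w‖| := by
  have hw' : (‖w‖ : ℂ) ≠ 0 := by exact_mod_cast norm_ne_zero_iff.mpr hw
  have : w / ‖w‖ * s - w = w / ‖w‖ * ((s - ‖w‖ : ℝ) : ℂ) := by
    push_cast; field_simp
  rw [this, norm_mul, norm_div, Complex.norm_real, Complex.norm_real, norm_norm,
    div_self (norm_ne_zero_iff.mpr hw), one_mul, Real.norm_eq_abs]

section InnerProductSpace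

variable {E : Type*} [SeminormedAddCommGroup E] [InnerProductSpace ℂ E]

/-- `qf` with `a = M x`, `b = N x`. Mathlib's inner product is conjugate-linear in its first
argument, so `⟨u, v⟩_P` corresponds to `⟪v, u⟫_ℂ`. -/
noncomputable def quotientFun (a b : E) (μ : ℂ) : ℂ :=
  ⟪b, a - μ • b⟫_ℂ / ‖⟪b, a - μ • b⟫_ℂ‖ * ((‖a - μ • b‖ / ‖b‖ : ℝ) : ℂ) + μ

variable {a b : E}

lemma inner_sub_div_inner_self_smul (hb : ‖b‖ ≠ 0) :
    ⟪b, a - (⟪b, a⟫_ℂ / ⟪b, b⟫_ℂ) • b⟫_ℂ = 0 := by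
  have : ⟪b, b⟫_ℂ ≠ 0 := by
    rw [inner_self_eq_norm_sq_to_K]
    exact pow_ne_zero 2 (RCLike.ofReal_ne_zero.mpr hb)
  rw [inner_sub_right, inner_smul_right, div_mul_cancel₀ _ this, sub_self]

variable {ρ : ℂ} (hρ : ⟪b, a - ρ • b⟫_ℂ = 0)
include hρ

lemma inner_sub_smul_eq_sub_mul_norm_sq (μ : ℂ) :
    ⟪b, a - μ • b⟫_ℂ = (ρ - μ) * ‖b‖ ^ 2 := by
  have : a - μ • b = (a - ρ • b) + (ρ - μ) • b := by rw [sub_smul]; abel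
  rw [this, inner_add_right, hρ, inner_smul_right, inner_self_eq_norm_sq_to_K, zero_add,
    RCLike.ofReal_eq_complex_ofReal]

lemma norm_sub_smul_sq_eq_add (μ : ℂ) :
    ‖a - μ • b‖ ^ 2 = ‖a - ρ • b‖ ^ 2 + ‖ρ - μ‖ ^ 2 * ‖b‖ ^ 2 := by
  have horth : ⟪a - ρ • b, (ρ - μ) • b⟫_ℂ = 0 := by
    rw [inner_smul_right, inner_eq_zero_symm.mp hρ, mul_zero]
  have : a - μ • b = (a - ρ • b) + (ρ - μ) • b := by rw [sub_smul]; abel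
  rw [this, sq, norm_add_sq_eq_norm_sq_add_norm_sq_of_inner_eq_zero _ _ horth, norm_smul]
  ring

lemma norm_quotientFun_sub_le (hb : ‖b‖ ≠ 0) {μ : ℂ} (hμ : μ ≠ ρ) :
    ‖quotientFun a b μ - ρ‖ ≤ (‖a - ρ • b‖ / ‖b‖) ^ 2 / ‖ρ - μ‖ := by
  have hw : ρ - μ ≠ 0 := sub_ne_zero.mpr hμ.symm
  have hb2 : (‖b‖ : ℂ) ^ 2 ≠ 0 := pow_ne_zero 2 (by exact_mod_cast hb)
  have hphase : ⟪b, a - μ • b⟫_ℂ / ‖⟪b, a - μ • b⟫_ℂ‖ = (ρ - μ) / ‖ρ - μ‖ := by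
    rw [inner_sub_smul_eq_sub_mul_norm_sq hρ, norm_mul, norm_pow, Complex.norm_real,
      norm_norm]
    push_cast
    field_simp
  have hsq : (‖a - μ • b‖ / ‖b‖) ^ 2 = (‖a - ρ • b‖ / ‖b‖) ^ 2 + ‖ρ - μ‖ ^ 2 := by
    rw [div_pow, div_pow, norm_sub_smul_sq_eq_add hρ]
    field_simp
  have hq : quotientFun a b μ - ρ =
      (ρ - μ) / ‖ρ - μ‖ * ((‖a - μ • b‖ / ‖b‖ : ℝ) : ℂ) - (ρ - μ) := by
    rw [quotientFun, hphase]; ring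
  rw [hq, Complex.norm_div_norm_mul_sub_self hw]
  exact abs_sub_le_sq_div_of_sq_eq_sq_add_sq (by positivity) (norm_pos_iff.mpr hw) hsq

theorem tendsto_quotientFun_cobounded (hb : ‖b‖ ≠ 0) :
    Tendsto (quotientFun a b) (cobounded ℂ) (𝓝 ρ) := by
  have hdist : Tendsto (fun μ : ℂ => ‖ρ - μ‖) (cobounded ℂ) atTop :=
    tendsto_norm_cobounded_atTop.comp (tendsto_const_sub_cobounded ρ)
  rw [tendsto_iff_norm_sub_tendsto_zero]
  refine squeeze_zero' (Eventually.of_forall fun μ => norm_nonneg _)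
    ((eventually_ne_cobounded ρ).mono fun μ hμ => norm_quotientFun_sub_le hρ hb hμ) ?_
  exact tendsto_const_nhds.div_atTop hdist

end InnerProductSpace

section Matrix

variable {n : ℕ} {P : Matrix (Fin n) (Fin n) ℂ}

lemma innerP_eq_inner (hP : P.PosSemidef) (u v : Fin n → ℂ) :
    innerP P u v = @inner ℂ _ (P.toInnerProductSpace hP).toInner v u :=
  dotProduct_comm _ _

lemma normP_eq_norm (hP : P.PosSemidef) (u : Fin n → ℂ) :
    normP P u = @norm _ (P.toSeminormedAddCommGroup hP).toNorm u := by
  rw [normP, innerP_eq_inner hP]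
  rfl

lemma normP_pos (hP : P.PosDef) {u : Fin n → ℂ} (hu : u ≠ 0) : 0 < normP P u :=
  Real.sqrt_pos.mpr (hP.re_dotProduct_pos hu)

end Matrix

theorem stmt_2_general {n : ℕ} (M N P : Matrix (Fin n) (Fin n) ℂ)
    (hP : P.PosDef) (x : Fin n → ℂ) (hx : N.mulVec x ≠ 0) :
    Tendsto (fun μ : ℂ => qf M N P x μ) (Bornology.cobounded ℂ) (𝓝 (rq M N P x)) := by
  let _ := P.toSeminormedAddCommGroup hP.posSemidef
  let _ := P.toInnerProductSpace hP.posSemidef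
  have hb := (normP_pos hP hx).ne'
  rw [normP_eq_norm hP.posSemidef] at hb
  have hqf : (fun μ : ℂ => qf M N P x μ) = quotientFun (M *ᵥ x) (N *ᵥ x) := by
    funext μ
    simp only [qf, quotientFun, innerP_eq_inner hP.posSemidef, normP_eq_norm hP.posSemidef,
      sub_mulVec, smul_mulVec]
  have hrq : rq M N P x = ⟪N *ᵥ x, M *ᵥ x⟫_ℂ / ⟪N *ᵥ x, N *ᵥ x⟫_ℂ := by
    simp only [rq, innerP_eq_inner hP.posSemidef]
  rw [hqf, hrq]
  exact tendsto_quotientFun_cobounded (inner_sub_div_inner_self_smul hb) hb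

/-- the quotient function tends to the Rayleigh quotient at infinity. -/
theorem stmt_2 {n : ℕ} (hn : 1 ≤ n) (M N P : Matrix (Fin n) (Fin n) ℂ)
    (hP : P.PosDef) (x : Fin n → ℂ) (hx : N.mulVec x ≠ 0) :
    Tendsto (fun μ : ℂ => qf M N P x μ) (Bornology.cobounded ℂ) (𝓝 (rq M N P x)) :=
  stmt_2_general M N P hP x hx
end

section
/- Assume the pencil (M,N) is self-adjoint with respect to P, N is invertible, and every λ ∈ Λ(M,N) is real with λ ≥ 0; let λₙ = max Λ(M,N). Let x ≠ 0 and define for μ ∈ ℝ the Algorithm-2 update α(μ) = μ + ‖(M−μN)x‖_P/‖Nx‖_P, and set μ₀ = ‖Mx‖_P/(2‖Nx‖_P) and μ₁ = α(μ₀)/2. Then μ₀ ≤ μ₁ and α(μ₀) ≤ α(μ₁) ≤ λₙ; moreover, if μ₀ ≠ rq_{M,N}(x), then qf_x(μ₀) ≤ α(μ₀), and hence 0 ≤ λₙ − α(μ₁) ≤ λₙ − qf_x(μ₀): one iteration of the midpoint update does not worsen, and is bounded above by λₙ as an underestimate. -/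
/-!
Write `P = Lᴴ L`. The matrix `T = L M N⁻¹ L⁻¹` is Hermitian, its spectrum is the generalized
spectrum of `(M, N)`, and `‖(M - μN)x‖_P = ‖(T - μ)v‖` for `v = L N x`. So the residual
`r(μ) = ‖(M - μN)x‖_P / ‖Nx‖_P` is `1`-Lipschitz in `μ`, and, since the spectrum of `T` lies in
`[0, λₙ]`, the operator norm of `T - μ` gives `r(μ) ≤ λₙ - μ` for `0 ≤ μ ≤ λₙ / 2`. These two
facts alone yield the claims about `α(μ) = μ + r(μ)` at `μ₀ = r(0) / 2` and `μ₁ = α(μ₀) / 2`;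
finally `Re qf_x(μ) ≤ α(μ)` because `c / |c|` has modulus at most one.
-/

open Matrix Filter Topology
open scoped ComplexOrder

/-- The Algorithm-2 update `α(μ) = μ + ‖(M−μN)x‖_P/‖Nx‖_P`. -/
noncomputable def alg2 {n : ℕ} (M N P : Matrix (Fin n) (Fin n) ℂ)
    (x : Fin n → ℂ) (μ : ℝ) : ℝ :=
  μ + normP P ((M - (μ : ℂ) • N).mulVec x) / normP P (N.mulVec x)

open scoped Matrix.Norms.L2Operator

namespace Matrix

variable {ι : Type*} [Fintype ι] [DecidableEq ι]

lemma PosDef.exists_isUnit_conjTranspose_mul_self_eq {P : Matrix ι ι ℂ} (hP : P.PosDef) :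
    ∃ L : Matrix ι ι ℂ, IsUnit L ∧ Lᴴ * L = P := by
  open scoped MatrixOrder in
  have hsq : (CFC.sqrt P)ᴴ * CFC.sqrt P = P := by
    rw [(CFC.sqrt_nonneg P).posSemidef.1.eq, CFC.sqrt_mul_sqrt_self P hP.posSemidef.nonneg]
  exact ⟨CFC.sqrt P, isUnit_of_mul_isUnit_right (hsq ▸ hP.isUnit), hsq⟩

lemma IsHermitian.norm_sub_smul_one_le {T : Matrix ι ι ℂ} (hT : T.IsHermitian) {lam μ : ℝ}
    (hspec : spectrum ℝ T ⊆ Set.Icc 0 lam) (hμ₀ : 0 ≤ μ) (hμ : 2 * μ ≤ lam) :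
    ‖T - (μ : ℂ) • 1‖ ≤ lam - μ := by
  have hTsa : IsSelfAdjoint T := hT
  have hcfc : T - (μ : ℂ) • 1 = cfc (fun t : ℝ => t - μ) T := by
    rw [cfc_sub _ _, cfc_id' ℝ T, cfc_const μ T, Algebra.algebraMap_eq_smul_one, Complex.coe_smul]
  rw [hcfc]
  refine norm_cfc_le (by linarith) fun t ht => ?_
  obtain ⟨ht₀, ht⟩ := hspec ht
  rw [Real.norm_eq_abs, abs_le]
  constructor <;> linarith

lemma IsHermitian.norm_sub_smul_one_mulVec_div_le {T : Matrix ι ι ℂ} (hT : T.IsHermitian)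
    {lam μ : ℝ} (hspec : spectrum ℝ T ⊆ Set.Icc 0 lam) (hμ₀ : 0 ≤ μ) (hμ : 2 * μ ≤ lam)
    (v : ι → ℂ) : ‖WithLp.toLp 2 ((T - (μ : ℂ) • 1) *ᵥ v)‖ / ‖WithLp.toLp 2 v‖ ≤ lam - μ :=
  div_le_of_le_mul₀ (norm_nonneg _) (by linarith) <|
    (l2_opNorm_mulVec _ (WithLp.toLp 2 v)).trans <|
      mul_le_mul_of_nonneg_right (hT.norm_sub_smul_one_le hspec hμ₀ hμ) (norm_nonneg _)

lemma lipschitzWith_norm_sub_smul_one_mulVec_div (T : Matrix ι ι ℂ) (v : ι → ℂ) :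
    LipschitzWith 1 fun μ : ℝ => ‖WithLp.toLp 2 ((T - (μ : ℂ) • 1) *ᵥ v)‖ / ‖WithLp.toLp 2 v‖ := by
  refine LipschitzWith.of_dist_le_mul fun b c => ?_
  have hdiff : WithLp.toLp 2 ((T - (b : ℂ) • 1) *ᵥ v) - WithLp.toLp 2 ((T - (c : ℂ) • 1) *ᵥ v)
      = ((c - b : ℝ) : ℂ) • WithLp.toLp 2 v := by
    rw [← WithLp.toLp_sub, ← WithLp.toLp_smul, ← sub_mulVec, sub_sub_sub_cancel_left,
      ← sub_smul, smul_mulVec, one_mulVec]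
    push_cast
    rfl
  rw [Real.dist_eq, ← sub_div, abs_div, abs_norm, NNReal.coe_one, one_mul]
  refine div_le_of_le_mul₀ (norm_nonneg _) (abs_nonneg _) ?_
  calc _ ≤ ‖((c - b : ℝ) : ℂ) • WithLp.toLp 2 v‖ := hdiff ▸ abs_norm_sub_norm_le _ _
    _ = dist b c * ‖WithLp.toLp 2 v‖ := by
      rw [norm_smul, Complex.norm_real, Real.norm_eq_abs, abs_sub_comm, Real.dist_eq]

end Matrix

section Reduction

variable {R : Type*} [CommRing R] {ι : Type*} [Fintype ι] [DecidableEq ι]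

lemma Matrix.mul_sub_smul_eq_of_mul_eq {L M N T : Matrix ι ι R} (h : L * M = T * (L * N))
    (z : R) : L * (M - z • N) = (T - z • 1) * (L * N) := by
  rw [Matrix.mul_sub, h, Matrix.sub_mul, Matrix.mul_smul, Matrix.smul_mul, Matrix.one_mul]

variable [StarRing R]

/-- For `P = Lᴴ L` this is `L M N⁻¹ L⁻¹`, written so that it is visibly Hermitian when
`Nᴴ P M` is. -/
noncomputable def hermitianReduction (L M N P : Matrix ι ι R) : Matrix ι ι R :=
  ((L * N)⁻¹)ᴴ * (Nᴴ * P * M) * (L * N)⁻¹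

lemma mul_eq_hermitianReduction_mul {L M N P : Matrix ι ι R} (hLP : Lᴴ * L = P)
    (hLN : IsUnit (L * N)) : L * M = hermitianReduction L M N P * (L * N) := by
  have hdet := (Matrix.isUnit_iff_isUnit_det _).mp hLN
  have h : ((L * N)⁻¹)ᴴ * (Nᴴ * P * M) = ((L * N) * (L * N)⁻¹)ᴴ * (L * M) := by
    simp only [← hLP, Matrix.conjTranspose_mul, Matrix.mul_assoc]
  rw [hermitianReduction, h, Matrix.mul_nonsing_inv _ hdet, Matrix.conjTranspose_one,
    Matrix.one_mul, Matrix.nonsing_inv_mul_cancel_right _ _ hdet]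

end Reduction

section Pencil

variable {n : ℕ} {L M N P T : Matrix (Fin n) (Fin n) ℂ}

lemma genSpec_eq_spectrum_of_mul_eq (hL : IsUnit L) (hLN : IsUnit (L * N))
    (h : L * M = T * (L * N)) : genSpec M N = spectrum ℂ T := by
  ext z
  show (M - z • N).det = 0 ↔ _
  rw [spectrum.mem_iff, Algebra.algebraMap_eq_smul_one, ← IsUnit.neg_iff, neg_sub,
    isUnit_iff_isUnit_det, isUnit_iff_ne_zero, not_not,
    ← ((isUnit_iff_isUnit_det L).mp hL).mul_right_eq_zero, ← det_mul,
    mul_sub_smul_eq_of_mul_eq h, det_mul, ((isUnit_iff_isUnit_det _).mp hLN).mul_left_eq_zero]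

lemma normP_eq_norm_toLp_mulVec (hLP : Lᴴ * L = P) (y : Fin n → ℂ) :
    normP P y = ‖WithLp.toLp 2 (L *ᵥ y)‖ := by
  rw [normP, innerP, norm_eq_sqrt_re_inner (𝕜 := ℂ), EuclideanSpace.inner_toLp_toLp, ← hLP,
    ← mulVec_mulVec, star_mulVec, dotProduct_mulVec, dotProduct_comm]
  rfl

lemma alg2_eq_add_norm_hermitianReduction (hLP : Lᴴ * L = P) (hLN : IsUnit (L * N))
    (x : Fin n → ℂ) (μ : ℝ) :
    alg2 M N P x μ = μ +
      ‖WithLp.toLp 2 ((hermitianReduction L M N P - (μ : ℂ) • 1) *ᵥ ((L * N) *ᵥ x))‖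
        / ‖WithLp.toLp 2 ((L * N) *ᵥ x)‖ := by
  rw [alg2, normP_eq_norm_toLp_mulVec hLP, normP_eq_norm_toLp_mulVec hLP, mulVec_mulVec,
    mulVec_mulVec, mulVec_mulVec,
    mul_sub_smul_eq_of_mul_eq (mul_eq_hermitianReduction_mul hLP hLN)]

end Pencil

lemma Complex.re_div_norm_mul_ofReal_le (c : ℂ) {ρ : ℝ} (hρ : 0 ≤ ρ) :
    (c / (‖c‖ : ℂ) * ρ).re ≤ ρ := by
  rw [Complex.re_mul_ofReal]
  refine mul_le_of_le_one_left hρ ((Complex.re_le_norm _).trans ?_)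
  rw [norm_div, Complex.norm_real, norm_norm]
  exact div_self_le_one _

lemma qf_re_le_alg2 {n : ℕ} (M N P : Matrix (Fin n) (Fin n) ℂ) (x : Fin n → ℂ) (μ : ℝ) :
    (qf M N P x μ).re ≤ alg2 M N P x μ := by
  rw [qf, alg2, Complex.add_re, Complex.ofReal_re, add_comm]
  gcongr
  exact Complex.re_div_norm_mul_ofReal_le _ (div_nonneg (Real.sqrt_nonneg _) (Real.sqrt_nonneg _))

lemma midpoint_update_spec {r : ℝ → ℝ} {lam μ₀ μ₁ : ℝ} (hr : LipschitzWith 1 r) (hr₀ : 0 ≤ r 0)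
    (hlam : 0 ≤ lam) (hbound : ∀ μ, 0 ≤ μ → 2 * μ ≤ lam → r μ ≤ lam - μ)
    (hμ₀ : μ₀ = r 0 / 2) (hμ₁ : μ₁ = (μ₀ + r μ₀) / 2) :
    μ₀ ≤ μ₁ ∧ μ₀ + r μ₀ ≤ μ₁ + r μ₁ ∧ μ₁ + r μ₁ ≤ lam := by
  have hlip : ∀ b c, b ≤ c → r b ≤ r c + (c - b) := fun b c hbc => by
    have h := hr.dist_le_mul b c
    rw [NNReal.coe_one, one_mul, Real.dist_eq, Real.dist_eq, abs_sub_comm b,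
      abs_of_nonneg (sub_nonneg.mpr hbc)] at h
    linarith [le_abs_self (r b - r c)]
  have h2μ₀ : 2 * μ₀ ≤ lam := by linarith [hbound 0 le_rfl (by linarith)]
  have hμ₀_nonneg : 0 ≤ μ₀ := by linarith
  have hμ₀₁ : μ₀ ≤ μ₁ := by linarith [hlip 0 μ₀ hμ₀_nonneg]
  have h2μ₁ : 2 * μ₁ ≤ lam := by linarith [hbound μ₀ hμ₀_nonneg h2μ₀]
  exact ⟨hμ₀₁, by linarith [hlip μ₀ μ₁ hμ₀₁], by linarith [hbound μ₁ (by linarith) h2μ₁]⟩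

theorem stmt_12_general {n : ℕ} (M N P : Matrix (Fin n) (Fin n) ℂ)
    (hP : P.PosDef) (hsa : (Nᴴ * P * M).IsHermitian) (hN : IsUnit N)
    (hpos : ∀ l ∈ genSpec M N, l.im = 0 ∧ 0 ≤ l.re)
    (lamn : ℝ) (hlamn : IsGreatest {l : ℝ | (l : ℂ) ∈ genSpec M N} lamn)
    (x : Fin n → ℂ)
    (μ0 μ1 : ℝ)
    (hμ0 : μ0 = normP P (M.mulVec x) / (2 * normP P (N.mulVec x)))
    (hμ1 : μ1 = alg2 M N P x μ0 / 2) :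
    μ0 ≤ μ1 ∧
    alg2 M N P x μ0 ≤ alg2 M N P x μ1 ∧
    alg2 M N P x μ1 ≤ lamn ∧
    ((μ0 : ℂ) ≠ rq M N P x →
      (qf M N P x μ0).re ≤ alg2 M N P x μ0 ∧
      0 ≤ lamn - alg2 M N P x μ1 ∧
      lamn - alg2 M N P x μ1 ≤ lamn - (qf M N P x μ0).re) := by
  obtain ⟨L, hL, hLP⟩ := hP.exists_isUnit_conjTranspose_mul_self_eq
  have hLN : IsUnit (L * N) := hL.mul hN
  set T := hermitianReduction L M N P
  have hT : T.IsHermitian := isHermitian_conjTranspose_mul_mul _ hsa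
  have hspec : spectrum ℝ T ⊆ Set.Icc 0 lamn := fun t ht => by
    have hmem : (t : ℂ) ∈ genSpec M N := by
      rw [genSpec_eq_spectrum_of_mul_eq hL hLN (mul_eq_hermitianReduction_mul hLP hLN)]
      exact spectrum.algebraMap_mem ℂ ht
    exact ⟨by simpa using (hpos _ hmem).2, hlamn.2 hmem⟩
  set r := fun μ : ℝ =>
    ‖WithLp.toLp 2 ((T - (μ : ℂ) • 1) *ᵥ ((L * N) *ᵥ x))‖ / ‖WithLp.toLp 2 ((L * N) *ᵥ x)‖
  have halg : ∀ μ, alg2 M N P x μ = μ + r μ := alg2_eq_add_norm_hermitianReduction hLP hLN x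
  have hμ0r : μ0 = r 0 / 2 := by
    rw [hμ0, ← zero_add (r 0), ← halg, alg2]
    simp only [Complex.ofReal_zero, zero_smul, sub_zero, zero_add]
    ring
  have hlamn0 : 0 ≤ lamn := by simpa using (hpos _ hlamn.1).2
  obtain ⟨h01, hα01, hα1⟩ := midpoint_update_spec
    (lipschitzWith_norm_sub_smul_one_mulVec_div T _) (by positivity) hlamn0
    (fun μ h0 h2 => hT.norm_sub_smul_one_mulVec_div_le hspec h0 h2 _)
    hμ0r (hμ1.trans (by rw [halg]))
  have hqf := qf_re_le_alg2 M N P x μ0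
  simp only [halg] at hqf ⊢
  exact ⟨h01, hα01, hα1, fun _ => ⟨hqf, by linarith, by linarith⟩⟩

/-- one iteration of the midpoint update of Algorithm 2 does not worsen the
estimate and remains an underestimate of `λₙ`. -/
theorem stmt_12 {n : ℕ} (hn : 1 ≤ n) (M N P : Matrix (Fin n) (Fin n) ℂ)
    (hP : P.PosDef) (hsa : (Nᴴ * P * M).IsHermitian) (hN : IsUnit N)
    (hpos : ∀ l ∈ genSpec M N, l.im = 0 ∧ 0 ≤ l.re)
    (lamn : ℝ) (hlamn : IsGreatest {l : ℝ | (l : ℂ) ∈ genSpec M N} lamn)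
    (x : Fin n → ℂ) (hx : x ≠ 0)
    (μ0 μ1 : ℝ)
    (hμ0 : μ0 = normP P (M.mulVec x) / (2 * normP P (N.mulVec x)))
    (hμ1 : μ1 = alg2 M N P x μ0 / 2) :
    μ0 ≤ μ1 ∧
    alg2 M N P x μ0 ≤ alg2 M N P x μ1 ∧
    alg2 M N P x μ1 ≤ lamn ∧
    ((μ0 : ℂ) ≠ rq M N P x →
      (qf M N P x μ0).re ≤ alg2 M N P x μ0 ∧
      0 ≤ lamn - alg2 M N P x μ1 ∧
      lamn - alg2 M N P x μ1 ≤ lamn - (qf M N P x μ0).re) :=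
  stmt_12_general M N P hP hsa hN hpos lamn hlamn x μ0 μ1 hμ0 hμ1
end
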